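/- If C is a self-dual linear code over R_j = Z_4[ω]/(ω²−j) with j ∈ {2, 2ω}, then its Gray image ψ(C), where ψ(a+ωb) = (b, a+b) applied coordinatewise, is a self-dual code over Z_4. -/

import Mathlib

open Polynomial

/-- The ring `Z₄[ω]` with `ω² = a + bω`, i.e. `Z₄[X]/(X² − (a + bX))`. -/
abbrev Rring (a b : ZMod 4) := AdjoinRoot ((X : (ZMod 4)[X]) ^ 2 - (C a + C b * X))

/-- The element `ω` of `Rring a b`. -/
noncomputable abbrev w (a b : ZMod 4) : Rring a b := AdjoinRoot.root _

lemma pmonic (a b : ZMod 4) : ((X : (ZMod 4)[X]) ^ 2 - (C a + C b * X)).Monic := by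
  monicity!

/-- The Gray map `ψ : R_θ → Z₄²`, `ψ(a + ωb) = (b, a + b)`, computed from the
canonical representative of degree `< 2`. -/
noncomputable def psi (a b : ZMod 4) (z : Rring a b) : ZMod 4 × ZMod 4 :=
  ((AdjoinRoot.modByMonicHom (pmonic a b) z).coeff 1,
    (AdjoinRoot.modByMonicHom (pmonic a b) z).coeff 0 +
      (AdjoinRoot.modByMonicHom (pmonic a b) z).coeff 1)

/-- The Gray map extended coordinatewise to words. -/
noncomputable def Psi (a b : ZMod 4) (n : ℕ) (c : Fin n → Rring a b) :
    Fin n → ZMod 4 × ZMod 4 :=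
  fun i => psi a b (c i)

/-- The dual of a set of words over `R_θ` w.r.t. the standard inner product. -/
def dualR (a b : ZMod 4) (n : ℕ) (S : Set (Fin n → Rring a b)) :
    Set (Fin n → Rring a b) :=
  {v | ∀ u ∈ S, ∑ i : Fin n, v i * u i = 0}

/-- The dual of a set of words over `Z₄²ⁿ` w.r.t. the standard inner product. -/
def dualZ (n : ℕ) (S : Set (Fin n → ZMod 4 × ZMod 4)) :
    Set (Fin n → ZMod 4 × ZMod 4) :=
  {v | ∀ u ∈ S, ∑ i : Fin n, ((v i).1 * (u i).1 + (v i).2 * (u i).2) = 0}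

/-! Write `z = x + yω`. The Gray images pair as `(y, x + y) · (y', x' + y') = xx' + xy' + yx' + 2yy'`,
while the coordinate sum of `zz'` is `xx' + xy' + yx' + (a + b)yy'`; so for `a + b = 2` the
`Z₄`-inner product of Gray images is the coordinate sum of the `R`-inner product. An element `s`
whose coordinate sums of `s` and `ωs` both vanish is zero, and a linear code is closed under
multiplication by `ω`, hence `ψ(C)^⊥ = ψ(C^⊥)` for every linear code `C`. -/

instance : Fact (1 < 4) := ⟨by norm_num⟩

namespace Rring

variable {a b : ZMod 4}

noncomputable def ofPair (a b x y : ZMod 4) : Rring a b :=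
  algebraMap _ _ x + algebraMap _ _ y * w a b

lemma ofPair_eq_mk (x y : ZMod 4) :
    ofPair a b x y = AdjoinRoot.mk _ (C y * X + C x) := by
  simp [ofPair, AdjoinRoot.algebraMap_eq, w, add_comm]

lemma natDegree_defining_poly (a b : ZMod 4) :
    ((X : (ZMod 4)[X]) ^ 2 - (C a + C b * X)).natDegree = 2 := by
  compute_degree!

lemma modByMonicHom_ofPair (x y : ZMod 4) :
    AdjoinRoot.modByMonicHom (pmonic a b) (ofPair a b x y) = C y * X + C x := by
  rw [ofPair_eq_mk, AdjoinRoot.modByMonicHom_mk, modByMonic_eq_self_iff (pmonic a b),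
    degree_eq_natDegree (pmonic a b).ne_zero, natDegree_defining_poly]
  compute_degree!

lemma natDegree_modByMonicHom_le_one (z : Rring a b) :
    (AdjoinRoot.modByMonicHom (pmonic a b) z).natDegree ≤ 1 := by
  obtain ⟨f, rfl⟩ := AdjoinRoot.mk_surjective z
  have hq : (X ^ 2 - (C a + C b * X) : (ZMod 4)[X]) ≠ 1 := fun h => by
    simpa [h] using natDegree_defining_poly a b
  have := natDegree_modByMonic_lt f (pmonic a b) hq
  rw [natDegree_defining_poly] at this
  rw [AdjoinRoot.modByMonicHom_mk]
  omega

lemma exists_eq_ofPair (z : Rring a b) : ∃ x y, z = ofPair a b x y := by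
  refine ⟨(AdjoinRoot.modByMonicHom (pmonic a b) z).coeff 0,
    (AdjoinRoot.modByMonicHom (pmonic a b) z).coeff 1, ?_⟩
  rw [ofPair_eq_mk, ← eq_X_add_C_of_natDegree_le_one (natDegree_modByMonicHom_le_one z),
    AdjoinRoot.mk_leftInverse]

lemma ofPair_mul (x y x' y' : ZMod 4) :
    ofPair a b x y * ofPair a b x' y' =
      ofPair a b (x * x' + a * (y * y')) (x * y' + y * x' + b * (y * y')) := by
  rw [ofPair_eq_mk, ofPair_eq_mk, ofPair_eq_mk, ← map_mul, AdjoinRoot.mk_eq_mk]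
  exact ⟨C (y * y'), by simp only [map_add, map_mul]; ring⟩

lemma psi_ofPair (x y : ZMod 4) : psi a b (ofPair a b x y) = (y, x + y) := by
  simp [psi, modByMonicHom_ofPair]

noncomputable def coeffSum (a b : ZMod 4) : Rring a b →ₗ[ZMod 4] ZMod 4 :=
  (lcoeff (ZMod 4) 0 + lcoeff (ZMod 4) 1) ∘ₗ AdjoinRoot.modByMonicHom (pmonic a b)

lemma coeffSum_ofPair (x y : ZMod 4) : coeffSum a b (ofPair a b x y) = x + y := by
  simp [coeffSum, modByMonicHom_ofPair]

lemma psi_mul_psi_add_psi_mul_psi (hab : a + b = 2) (u v : Rring a b) :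
    (psi a b u).1 * (psi a b v).1 + (psi a b u).2 * (psi a b v).2 = coeffSum a b (u * v) := by
  obtain ⟨x, y, rfl⟩ := exists_eq_ofPair u
  obtain ⟨x', y', rfl⟩ := exists_eq_ofPair v
  rw [ofPair_mul, psi_ofPair, psi_ofPair, coeffSum_ofPair]
  linear_combination (y * y') * hab.symm

lemma eq_zero_of_coeffSum_eq_zero (hab : a + b = 2) {z : Rring a b} (h : coeffSum a b z = 0)
    (hw : coeffSum a b (w a b * z) = 0) : z = 0 := by
  obtain ⟨x, y, rfl⟩ := exists_eq_ofPair z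
  have hw_ofPair : w a b = ofPair a b 0 1 := by simp [ofPair]
  rw [coeffSum_ofPair] at h
  rw [hw_ofPair, ofPair_mul, coeffSum_ofPair] at hw
  have hy : y = 0 := by linear_combination hw - h - y * hab
  have hx : x = 0 := by linear_combination h - hy
  simp [hx, hy, ofPair]

end Rring

open Rring

section Words

variable {a b : ZMod 4} {n : ℕ}

lemma Psi_surjective : Function.Surjective (Psi a b n) := fun y =>
  ⟨fun i => ofPair a b ((y i).2 - (y i).1) (y i).1, funext fun i => by simp [Psi, psi_ofPair]⟩

lemma sum_Psi_mul_Psi (hab : a + b = 2) (u v : Fin n → Rring a b) :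
    ∑ i, ((Psi a b n u i).1 * (Psi a b n v i).1 + (Psi a b n u i).2 * (Psi a b n v i).2) =
      coeffSum a b (∑ i, u i * v i) := by
  simp only [map_sum, Psi, psi_mul_psi_add_psi_mul_psi hab]

lemma dualZ_image_Psi (hab : a + b = 2) (S : Submodule (Rring a b) (Fin n → Rring a b)) :
    dualZ n (Psi a b n '' S) = Psi a b n '' dualR a b n S := by
  ext y
  constructor
  · intro hy
    obtain ⟨u, rfl⟩ := Psi_surjective (a := a) (b := b) y
    refine ⟨u, fun c hc => eq_zero_of_coeffSum_eq_zero hab ?_ ?_, rfl⟩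
    · rw [← sum_Psi_mul_Psi hab]
      exact hy _ ⟨c, hc, rfl⟩
    · have hw_sum : w a b * ∑ i, u i * c i = ∑ i, u i * (w a b • c) i := by
        simp [Finset.mul_sum, mul_left_comm]
      rw [hw_sum, ← sum_Psi_mul_Psi hab]
      exact hy _ ⟨_, S.smul_mem _ hc, rfl⟩
  · rintro ⟨v, hv, rfl⟩ _ ⟨c, hc, rfl⟩
    rw [sum_Psi_mul_Psi hab, hv c hc, map_zero]

end Words

/-- If `C` is a self-dual linear code over `R_j` for `j ∈ {2, 2ω}`, then its Gray
image is a self-dual code over `Z₄`. -/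
theorem stmt13 (a b : ZMod 4) (hj : (a, b) = (2, 0) ∨ (a, b) = (0, 2)) (n : ℕ)
    (Ccode : Submodule (Rring a b) (Fin n → Rring a b))
    (hsd : (Ccode : Set (Fin n → Rring a b)) =
      dualR a b n (Ccode : Set (Fin n → Rring a b))) :
    Psi a b n '' (Ccode : Set (Fin n → Rring a b)) =
      dualZ n (Psi a b n '' (Ccode : Set (Fin n → Rring a b))) := by
  have hab : a + b = 2 := by
    rcases hj with h | h <;> obtain ⟨rfl, rfl⟩ := Prod.mk.inj h <;> decide
  rw [dualZ_image_Psi hab, ← hsd]
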